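/- arXiv:1408.5559 — 4 statements merged into one kernel-verified Lean document; each statement's English description precedes it below -/
import Mathlib

section
/- For any solution x of the EigenAnt dynamics with positive initial conditions, the sum S(t) := Σ_{j=1}^n x_j(t) satisfies (β d_n)/α ≤ liminf_{t→∞} S(t) ≤ limsup_{t→∞} S(t) ≤ (β d_1)/α. In particular S is uniformly bounded from above and bounded away from zero on [T,∞) for some T ≥ 0. -/
/-!
Each coordinate solves the linear equation `ẋᵢ = aᵢ(t) xᵢ`, so `xᵢ(t) = xᵢ(0) exp ∫₀ᵗ aᵢ` stays
positive. Summing the equations gives `Ṡ = -α S + β ⟨d, x⟩ / S`, and since `⟨d, x⟩ / S` is a weighted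
mean of the `dᵢ` it lies in `[dₙ, d₁]`. Hence `-α S + β dₙ ≤ Ṡ ≤ -α S + β d₁`, and Grönwall's
comparison squeezes `S` between two exponentially relaxing functions whose limits are `β dₙ / α`
and `β d₁ / α`.
-/

open Filter Set Real Topology

section Gronwall

variable {f f' : ℝ → ℝ} {δ K ε : ℝ}

theorem neg_gronwallBound_neg (δ K ε x : ℝ) :
    -gronwallBound (-δ) K (-ε) x = gronwallBound δ K ε x := by
  by_cases hK : K = 0
  · simp only [hK, gronwallBound_K0]
    ring
  · simp only [gronwallBound_of_K_ne_0 hK]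
    ring

theorem le_gronwallBound_of_hasDerivAt (hf : ∀ t, 0 ≤ t → HasDerivAt f (f' t) t)
    (bound : ∀ t, 0 ≤ t → f' t ≤ K * f t + ε) {t : ℝ} (ht : 0 ≤ t) :
    f t ≤ gronwallBound (f 0) K ε t := by
  simpa using le_gronwallBound_of_liminf_deriv_right_le (b := t)
    (fun s hs => (hf s hs.1).continuousAt.continuousWithinAt)
    (fun s hs _ hr => (hf s hs.1).hasDerivWithinAt.liminf_right_slope_le hr) le_rfl
    (fun s hs => bound s hs.1) t ⟨ht, le_rfl⟩

theorem gronwallBound_le_of_hasDerivAt (hf : ∀ t, 0 ≤ t → HasDerivAt f (f' t) t)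
    (bound : ∀ t, 0 ≤ t → K * f t + ε ≤ f' t) {t : ℝ} (ht : 0 ≤ t) :
    gronwallBound (f 0) K ε t ≤ f t := by
  have h := le_gronwallBound_of_hasDerivAt (f := -f) (f' := -f') (K := K) (ε := -ε)
    (fun s hs => (hf s hs).neg) (fun s hs => by simp only [Pi.neg_apply]; linarith [bound s hs]) ht
  rw [← neg_gronwallBound_neg]
  simp only [Pi.neg_apply] at h
  linarith

theorem tendsto_gronwallBound_atTop (hK : K < 0) :
    Tendsto (gronwallBound δ K ε) atTop (𝓝 (-ε / K)) := by
  have hexp : Tendsto (fun x => exp (K * x)) atTop (𝓝 0) :=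
    tendsto_exp_atBot.comp (tendsto_id.const_mul_atTop_of_neg hK)
  rw [gronwallBound_of_K_ne_0 hK.ne]
  convert (hexp.const_mul δ).add ((hexp.sub_const 1).const_mul (ε / K)) using 2
  ring

theorem gronwallBound_mem_uIcc (hK : K < 0) {x : ℝ} (hx : 0 ≤ x) :
    gronwallBound δ K ε x ∈ uIcc δ (-ε / K) := by
  rw [gronwallBound_of_K_ne_0 hK.ne, ← segment_eq_uIcc]
  have he : exp (K * x) ≤ 1 := exp_le_one_iff.2 (mul_nonpos_of_nonpos_of_nonneg hK.le hx)
  refine ⟨exp (K * x), 1 - exp (K * x), (exp_pos _).le, by linarith, by ring, ?_⟩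
  simp only [smul_eq_mul]
  ring

end Gronwall

theorem le_liminf_and_limsup_le_of_squeeze {ι : Type*} {F : Filter ι} [F.NeBot]
    {f l u : ι → ℝ} {a b : ℝ} (hl : Tendsto l F (𝓝 a)) (hu : Tendsto u F (𝓝 b))
    (hlf : ∀ᶠ i in F, l i ≤ f i) (hfu : ∀ᶠ i in F, f i ≤ u i) :
    a ≤ liminf f F ∧ liminf f F ≤ limsup f F ∧ limsup f F ≤ b := by
  have hbdd_le : IsBoundedUnder (· ≤ ·) F f := hu.isBoundedUnder_le.mono_le hfu
  have hbdd_ge : IsBoundedUnder (· ≥ ·) F f := hl.isBoundedUnder_ge.mono_ge hlf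
  refine ⟨?_, liminf_le_limsup hbdd_le hbdd_ge, ?_⟩
  · exact hl.liminf_eq ▸ liminf_le_liminf hlf hl.isBoundedUnder_ge hbdd_le.isCoboundedUnder_ge
  · exact hu.limsup_eq ▸ limsup_le_limsup hfu hbdd_ge.isCoboundedUnder_le hu.isBoundedUnder_le

theorem eq_mul_exp_integral_of_hasDerivAt {f a : ℝ → ℝ} (ha : ContinuousOn a (Ici 0))
    (hf : ∀ t, 0 ≤ t → HasDerivAt f (a t * f t) t) {t : ℝ} (ht : 0 ≤ t) :
    f t = f 0 * exp (∫ s in (0 : ℝ)..t, a s) := by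
  -- `a` is only continuous on `[0, ∞)`; freeze it left of `0` to get a primitive on all of `ℝ`.
  set a' : ℝ → ℝ := fun s => a (max s 0)
  have ha' : Continuous a' := ha.comp_continuous (continuous_id.max continuous_const)
    fun s => le_max_right s 0
  set G : ℝ → ℝ := fun s => ∫ r in (0 : ℝ)..s, a' r
  have hderiv : ∀ s, 0 ≤ s → HasDerivAt (fun r => f r * exp (-G r)) 0 s := by
    intro s hs
    have hG : HasDerivAt G (a s) s := by
      simpa [a', max_eq_left hs] using (ha'.integral_hasStrictDerivAt 0 s).hasDerivAt
    exact ((hf s hs).mul hG.neg.exp).congr_deriv (by simp only [Pi.neg_apply]; ring)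
  have hconst := constant_of_has_deriv_right_zero (a := 0) (b := t)
    (fun s hs => (hderiv s hs.1).continuousAt.continuousWithinAt)
    (fun s hs => (hderiv s hs.1).hasDerivWithinAt) t ⟨ht, le_rfl⟩
  have hGt : G t = ∫ s in (0 : ℝ)..t, a s :=
    intervalIntegral.integral_congr fun s hs => by
      simp only [a', max_eq_left (uIcc_of_le ht ▸ hs).1]
  simp only [G, intervalIntegral.integral_same, neg_zero, exp_zero, mul_one] at hconst
  rw [← hconst, ← hGt, mul_assoc, ← exp_add, neg_add_cancel, exp_zero, mul_one]

section WeightedMean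

variable {ι : Type*} [Fintype ι] {α β D : ℝ} {d y : ι → ℝ}

theorem sum_rate_mul_le (hβ : 0 ≤ β) (hy : ∀ i, 0 ≤ y i) (hS : 0 < ∑ j, y j)
    (hd : ∀ i, d i ≤ D) :
    ∑ i, (-α + β * d i / ∑ j, y j) * y i ≤ -α * ∑ j, y j + β * D := by
  calc ∑ i, (-α + β * d i / ∑ j, y j) * y i
      ≤ ∑ i, (-α + β * D / ∑ j, y j) * y i := by
        gcongr with i
        exacts [hy i, hd i]
    _ = -α * ∑ j, y j + β * D := by
        rw [← Finset.mul_sum]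
        field_simp

theorem le_sum_rate_mul (hβ : 0 ≤ β) (hy : ∀ i, 0 ≤ y i) (hS : 0 < ∑ j, y j)
    (hd : ∀ i, D ≤ d i) :
    -α * ∑ j, y j + β * D ≤ ∑ i, (-α + β * d i / ∑ j, y j) * y i := by
  calc -α * ∑ j, y j + β * D
      = ∑ i, (-α + β * D / ∑ j, y j) * y i := by
        rw [← Finset.mul_sum]
        field_simp
    _ ≤ ∑ i, (-α + β * d i / ∑ j, y j) * y i := by
        gcongr with i
        exacts [hy i, hd i]

end WeightedMean

theorem stmt4
    (n : ℕ) (hn : 0 < n) (α β : ℝ) (hα : 0 < α) (hβ : 0 < β)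
    (d : Fin n → ℝ) (hd : ∀ i j : Fin n, i ≤ j → d j ≤ d i) (hdpos : ∀ i, 0 < d i)
    (x : ℝ → Fin n → ℝ)
    (hS : ∀ t : ℝ, 0 ≤ t → (∑ j, x t j) ≠ 0)
    (hode : ∀ (i : Fin n) (t : ℝ), 0 ≤ t →
      HasDerivAt (fun s => x s i) ((-α + β * d i / (∑ j, x t j)) * x t i) t)
    (hx0 : ∀ i, 0 < x 0 i)
    :
    β * d ⟨n - 1, by omega⟩ / α ≤ Filter.liminf (fun t => ∑ j, x t j) Filter.atTop ∧
    Filter.liminf (fun t => ∑ j, x t j) Filter.atTop ≤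
      Filter.limsup (fun t => ∑ j, x t j) Filter.atTop ∧
    Filter.limsup (fun t => ∑ j, x t j) Filter.atTop ≤ β * d ⟨0, hn⟩ / α ∧
    (∃ M : ℝ, ∀ t : ℝ, 0 ≤ t → ∑ j, x t j ≤ M) ∧
    (∃ T : ℝ, 0 ≤ T ∧ ∃ ε : ℝ, 0 < ε ∧ ∀ t : ℝ, T ≤ t → ε ≤ ∑ j, x t j) := by
  set S : ℝ → ℝ := fun t => ∑ j, x t j
  set dmax := d ⟨0, hn⟩
  set dmin := d ⟨n - 1, by omega⟩
  have hSderiv : ∀ t, 0 ≤ t → HasDerivAt S (∑ i, (-α + β * d i / S t) * x t i) t :=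
    fun t ht => HasDerivAt.fun_sum fun i _ => hode i t ht
  have hxpos : ∀ t, 0 ≤ t → ∀ i, 0 < x t i := by
    intro t ht i
    have hrate : ContinuousOn (fun s => -α + β * d i / S s) (Ici 0) := fun s hs =>
      (continuousAt_const.add (continuousAt_const.div (hSderiv s hs).continuousAt
        (hS s hs))).continuousWithinAt
    rw [eq_mul_exp_integral_of_hasDerivAt hrate (hode i) ht]
    exact mul_pos (hx0 i) (exp_pos _)
  have hSpos : ∀ t, 0 ≤ t → 0 < S t := fun t ht =>
    Finset.sum_pos (fun i _ => hxpos t ht i) ⟨⟨0, hn⟩, Finset.mem_univ _⟩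
  have hupper : ∀ t, 0 ≤ t → S t ≤ gronwallBound (S 0) (-α) (β * dmax) t :=
    fun t => le_gronwallBound_of_hasDerivAt hSderiv fun s hs =>
      sum_rate_mul_le hβ.le (fun i => (hxpos s hs i).le) (hSpos s hs)
        fun i => hd _ i (Nat.zero_le _)
  have hlower : ∀ t, 0 ≤ t → gronwallBound (S 0) (-α) (β * dmin) t ≤ S t :=
    fun t => gronwallBound_le_of_hasDerivAt hSderiv fun s hs =>
      le_sum_rate_mul hβ.le (fun i => (hxpos s hs i).le) (hSpos s hs)
        fun i => hd i _ (Nat.le_sub_one_of_lt i.isLt)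
  have hK : -α < 0 := neg_lt_zero.2 hα
  have hbounds : ∀ D, Tendsto (gronwallBound (S 0) (-α) (β * D)) atTop (𝓝 (β * D / α)) ∧
      ∀ t, 0 ≤ t → gronwallBound (S 0) (-α) (β * D) t ∈ uIcc (S 0) (β * D / α) := fun D => by
    rw [← neg_div_neg_eq (β * D) α]
    exact ⟨tendsto_gronwallBound_atTop hK, fun t ht => gronwallBound_mem_uIcc hK ht⟩
  obtain ⟨hliminf, hliminf_le_limsup, hlimsup⟩ := le_liminf_and_limsup_le_of_squeeze
    (hbounds dmin).1 (hbounds dmax).1 ((eventually_ge_atTop 0).mono hlower)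
    ((eventually_ge_atTop 0).mono hupper)
  refine ⟨hliminf, hliminf_le_limsup, hlimsup, ⟨max (S 0) (β * dmax / α), fun t ht => ?_⟩,
    ⟨0, le_rfl, min (S 0) (β * dmin / α), ?_, fun t ht => ?_⟩⟩
  · exact (hupper t ht).trans ((hbounds dmax).2 t ht).2
  · exact lt_min (hSpos 0 le_rfl) (div_pos (mul_pos hβ (hdpos _)) hα)
  · exact ((hbounds dmin).2 t ht).1.trans (hlower t ht)
end

section
/- For any solution x of the EigenAnt dynamics with positive initial conditions, every component corresponding to a strictly suboptimal path vanishes asymptotically: for every index i with d_i < d_1, one has x_i(t) → 0 as t → +∞. -/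
/-!
Each component solves a scalar linear equation, so with `I t = ∫₀ᵗ 1 / S` one has
`xⱼ(t) = xⱼ(0) exp (-α t + β dⱼ I(t))`: all components are driven by the same `I`. The total
mass obeys `S' ≤ -α S + β d₁`, hence stays bounded, and since `x₁ ≤ S` this caps
`β d₁ I(t) - α t`. For `dᵢ < d₁` the exponent `-α t + β dᵢ I(t)` is then at most
`(dᵢ / d₁) (β d₁ I(t) - α t) - (1 - dᵢ / d₁) α t`, which tends to `-∞`.
-/

open Filter Set Real

lemma pos_of_continuousOn_Ici_of_ne_zero {f : ℝ → ℝ} {a : ℝ} (hf : ContinuousOn f (Ici a))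
    (hne : ∀ t ∈ Ici a, f t ≠ 0) (ha : 0 < f a) {t : ℝ} (ht : a ≤ t) : 0 < f t := by
  by_contra h
  obtain ⟨s, hs, hs0⟩ :=
    intermediate_value_Icc' ht (hf.mono Icc_subset_Ici_self) ⟨not_lt.1 h, ha.le⟩
  exact hne s hs.1 hs0

lemma eq_mul_exp_sub_of_hasDerivAt_mul {f c C : ℝ → ℝ} {a b : ℝ} (hab : a ≤ b)
    (hf : ∀ t ∈ Icc a b, HasDerivAt f (c t * f t) t)
    (hC : ∀ t ∈ Icc a b, HasDerivAt C (c t) t) :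
    f b = f a * exp (C b - C a) := by
  set g : ℝ → ℝ := fun t => f t * exp (-C t)
  have hg : ∀ t ∈ Icc a b, HasDerivAt g 0 t := fun t ht => by
    refine ((hf t ht).fun_mul (hC t ht).fun_neg.exp).congr_deriv ?_
    ring
  have hgb : g b = g a := constant_of_has_deriv_right_zero
    (fun t ht => (hg t ht).continuousAt.continuousWithinAt)
    (fun t ht => (hg t (Ico_subset_Icc_self ht)).hasDerivWithinAt) b ⟨hab, le_rfl⟩
  calc f b = g b * exp (C b) := by simp [g, mul_assoc, ← exp_add]
    _ = g a * exp (C b) := by rw [hgb]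
    _ = f a * exp (C b - C a) := by simp only [g, sub_eq_add_neg, exp_add]; ring

lemma le_max_of_hasDerivAt_le_neg_mul_add {f f' : ℝ → ℝ} {α K : ℝ} (hα : 0 < α)
    (hf : ∀ t, 0 ≤ t → HasDerivAt f (f' t) t) (hf' : ∀ t, 0 ≤ t → f' t ≤ -α * f t + K)
    {t : ℝ} (ht : 0 ≤ t) : f t ≤ max (f 0) (K / α) := by
  have hgron := le_gronwallBound_of_liminf_deriv_right_le (δ := f 0) (K := -α) (ε := K)
    (fun s hs => (hf s hs.1).continuousAt.continuousWithinAt)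
    (fun s hs _ hr => (hf s hs.1).hasDerivWithinAt.liminf_right_slope_le hr) le_rfl
    (fun s hs => hf' s hs.1) t ⟨ht, le_rfl⟩
  rw [gronwallBound_of_K_ne_0 (neg_ne_zero.2 hα.ne'), sub_zero] at hgron
  set e := exp (-α * t)
  have he0 : 0 < e := exp_pos _
  have he1 : e ≤ 1 := exp_le_one_iff.2 (by nlinarith)
  have h0 := le_max_left (f 0) (K / α)
  have hK := le_max_right (f 0) (K / α)
  calc f t ≤ e * f 0 + (1 - e) * (K / α) := by
        convert hgron using 1; rw [div_neg]; beta_reduce; ring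
    _ ≤ e * max (f 0) (K / α) + (1 - e) * max (f 0) (K / α) := by gcongr
    _ = max (f 0) (K / α) := by ring

lemma tendsto_neg_mul_add_mul_atBot {J : ℝ → ℝ} {α p q K : ℝ} (hα : 0 < α) (hp : 0 ≤ p)
    (hpq : p < q) (hK : ∀ t, 0 ≤ t → -α * t + q * J t ≤ K) :
    Tendsto (fun t => -α * t + p * J t) atTop atBot := by
  have hq : 0 < q := hp.trans_lt hpq
  set ρ := p / q
  have hρ0 : 0 ≤ ρ := div_nonneg hp hq.le
  have hρ1 : ρ < 1 := (div_lt_one hq).2 hpq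
  have hlin : Tendsto (fun t => -((1 - ρ) * α) * t + ρ * K) atTop atBot :=
    tendsto_atBot_add_const_right _ _
      ((tendsto_const_mul_atBot_of_neg (by nlinarith)).2 tendsto_id)
  refine tendsto_atBot_mono' atTop ?_ hlin
  filter_upwards [eventually_ge_atTop 0] with t ht
  have hpρ : p = ρ * q := (div_mul_cancel₀ p hq.ne').symm
  calc -α * t + p * J t = ρ * (-α * t + q * J t) - (1 - ρ) * α * t := by rw [hpρ]; ring
    _ ≤ ρ * K - (1 - ρ) * α * t := by gcongr; exact hK t ht
    _ = -((1 - ρ) * α) * t + ρ * K := by ring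

section EigenAnt

variable {n : ℕ} {α β : ℝ} {d : Fin n → ℝ} {x : ℝ → Fin n → ℝ}

lemma eigenAnt_continuousOn_sum
    (hode : ∀ (i : Fin n) (t : ℝ), 0 ≤ t →
      HasDerivAt (fun s => x s i) ((-α + β * d i / (∑ j, x t j)) * x t i) t) :
    ContinuousOn (fun t => ∑ j, x t j) (Ici 0) :=
  continuousOn_finsetSum _ fun j _ t ht => (hode j t ht).continuousAt.continuousWithinAt

lemma eigenAnt_sum_pos (hS : ∀ t : ℝ, 0 ≤ t → (∑ j, x t j) ≠ 0)
    (hode : ∀ (i : Fin n) (t : ℝ), 0 ≤ t →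
      HasDerivAt (fun s => x s i) ((-α + β * d i / (∑ j, x t j)) * x t i) t)
    (hx0 : ∀ i, 0 < x 0 i) {t : ℝ} (ht : 0 ≤ t) : 0 < ∑ j, x t j := by
  refine pos_of_continuousOn_Ici_of_ne_zero (eigenAnt_continuousOn_sum hode) hS ?_ ht
  exact (Finset.sum_nonneg fun j _ => (hx0 j).le).lt_of_ne (hS 0 le_rfl).symm

lemma eigenAnt_eq_mul_exp (hS : ∀ t : ℝ, 0 ≤ t → (∑ j, x t j) ≠ 0)
    (hode : ∀ (i : Fin n) (t : ℝ), 0 ≤ t →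
      HasDerivAt (fun s => x s i) ((-α + β * d i / (∑ j, x t j)) * x t i) t)
    (hx0 : ∀ i, 0 < x 0 i) :
    ∃ I : ℝ → ℝ, ∀ j t, 0 ≤ t → x t j = x 0 j * exp (-α * t + β * d j * I t) := by
  set S : ℝ → ℝ := fun t => ∑ j, x t j
  -- `S` is only controlled on `[0, ∞)`; freezing it on `(-∞, 0]` gives a continuous integrand.
  set S₀ : ℝ → ℝ := fun s => S (max s 0)
  have hS₀pos : ∀ s, 0 < S₀ s := fun s => eigenAnt_sum_pos hS hode hx0 (le_max_right s 0)
  have hS₀cont : Continuous S₀ :=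
    (eigenAnt_continuousOn_sum hode).comp_continuous (continuous_id.max continuous_const)
      fun s => le_max_right s 0
  have hinv : Continuous fun s => (S₀ s)⁻¹ := hS₀cont.inv₀ fun s => (hS₀pos s).ne'
  refine ⟨fun t => ∫ s in (0 : ℝ)..t, (S₀ s)⁻¹, fun j t ht => ?_⟩
  have hC : ∀ s ∈ Icc 0 t, HasDerivAt (fun s => -α * s + β * d j * ∫ r in (0 : ℝ)..s, (S₀ r)⁻¹)
      (-α + β * d j / S s) s := fun s hs => by
    have hI := (hinv.integral_hasStrictDerivAt 0 s).hasDerivAt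
    refine (((hasDerivAt_id' s).const_mul (-α)).add (hI.const_mul (β * d j))).congr_deriv ?_
    simp only [S₀, max_eq_left hs.1, mul_one, div_eq_mul_inv]
  simpa using eq_mul_exp_sub_of_hasDerivAt_mul ht (fun s hs => hode j s hs.1) hC

lemma eigenAnt_sum_le {D : ℝ} (hα : 0 < α) (hβ : 0 < β) (hdD : ∀ j, d j ≤ D)
    (hode : ∀ (i : Fin n) (t : ℝ), 0 ≤ t →
      HasDerivAt (fun s => x s i) ((-α + β * d i / (∑ j, x t j)) * x t i) t)
    (hSpos : ∀ t, 0 ≤ t → 0 < ∑ j, x t j) (hxpos : ∀ j t, 0 ≤ t → 0 < x t j)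
    {t : ℝ} (ht : 0 ≤ t) : ∑ j, x t j ≤ max (∑ j, x 0 j) (β * D / α) := by
  refine le_max_of_hasDerivAt_le_neg_mul_add hα
    (fun s hs => HasDerivAt.fun_sum fun j _ => hode j s hs) (fun s hs => ?_) ht
  have hS := hSpos s hs
  calc ∑ j, (-α + β * d j / ∑ k, x s k) * x s j
      ≤ ∑ j, (-α + β * D / ∑ k, x s k) * x s j := by
        gcongr with j
        · exact (hxpos j s hs).le
        · exact hdD j
    _ = -α * ∑ j, x s j + β * D := by
        rw [← Finset.mul_sum]; field_simp

end EigenAnt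

theorem stmt11
    (n : ℕ) (hn : 0 < n) (α β : ℝ) (hα : 0 < α) (hβ : 0 < β)
    (d : Fin n → ℝ) (hd : ∀ i j : Fin n, i ≤ j → d j ≤ d i) (hdpos : ∀ i, 0 < d i)
    (x : ℝ → Fin n → ℝ)
    (hS : ∀ t : ℝ, 0 ≤ t → (∑ j, x t j) ≠ 0)
    (hode : ∀ (i : Fin n) (t : ℝ), 0 ≤ t →
      HasDerivAt (fun s => x s i) ((-α + β * d i / (∑ j, x t j)) * x t i) t)
    (hx0 : ∀ i, 0 < x 0 i)
    :
    ∀ i : Fin n, d i < d ⟨0, hn⟩ → Tendsto (fun t => x t i) atTop (nhds 0) := by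
  intro i hi
  set i₁ : Fin n := ⟨0, hn⟩
  obtain ⟨I, hI⟩ := eigenAnt_eq_mul_exp hS hode hx0
  have hxpos : ∀ j t, 0 ≤ t → 0 < x t j := fun j t ht => by
    rw [hI j t ht]; exact mul_pos (hx0 j) (exp_pos _)
  set M := max (∑ j, x 0 j) (β * d i₁ / α)
  have hSle : ∀ t, 0 ≤ t → ∑ j, x t j ≤ M := fun t ht =>
    eigenAnt_sum_le hα hβ (fun j => hd i₁ j (Fin.le_def.2 (Nat.zero_le _))) hode
      (fun s hs => eigenAnt_sum_pos hS hode hx0 hs) hxpos ht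
  have hexp₁ : ∀ t, 0 ≤ t → -α * t + β * d i₁ * I t ≤ log (M / x 0 i₁) := fun t ht => by
    have hx₁ : x t i₁ ≤ M :=
      (Finset.single_le_sum (fun j _ => (hxpos j t ht).le) (Finset.mem_univ i₁)).trans (hSle t ht)
    rw [le_log_iff_exp_le (div_pos ((hxpos i₁ t ht).trans_le hx₁) (hx0 i₁)), le_div_iff₀ (hx0 i₁)]
    linarith [hI i₁ t ht]
  have hexp := tendsto_neg_mul_add_mul_atBot hα (mul_pos hβ (hdpos i)).le
    (mul_lt_mul_of_pos_left hi hβ) hexp₁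
  have hlim := (tendsto_exp_atBot.comp hexp).const_mul (x 0 i)
  rw [mul_zero] at hlim
  refine hlim.congr' ?_
  filter_upwards [eventually_ge_atTop 0] with t ht
  exact (hI i t ht).symm
end

section
/- For any solution x of the EigenAnt dynamics with positive initial conditions, the total pheromone concentrates on the shortest paths: lim_{t→∞} S(t) = lim_{t→∞} Σ_{j : d_j = d_1} x_j(t) = β d_1 / α, where S(t) := Σ_{j=1}^n x_j(t). -/
/-!
Writing `S = ∑ x_j` and `I' = 1 / S`, each coordinate is `x_i(t) = x_i(0) exp(-α t + β d_i I(t))`,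
so the solution stays positive and `x_i / x_1` decays like `exp(-β (d_1 - d_i) I(t))`.
The total obeys `S' = -α S + β ⟨d⟩` with the weighted mean `⟨d⟩ = ∑ d_j x_j / S ≤ d_1`, so by
comparison `S` stays bounded. Hence `I` grows linearly, the weight of the suboptimal paths
vanishes, `⟨d⟩ → d_1`, and the linear equation for `S` forces `S → β d_1 / α`.
-/

open Filter Set Real Topology

section LinearComparison

variable {u u' : ℝ → ℝ} {α c T : ℝ}

lemma antitoneOn_sub_mul_exp (hu : ∀ t, T ≤ t → HasDerivAt u (u' t) t)
    (hle : ∀ t, T ≤ t → u' t ≤ α * (c - u t)) :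
    AntitoneOn (fun t => (u t - c) * exp (α * t)) (Ici T) := by
  have hderiv : ∀ t, T ≤ t → HasDerivAt (fun t => (u t - c) * exp (α * t))
      ((u' t + α * (u t - c)) * exp (α * t)) t := fun t ht => by
    refine (((hu t ht).sub_const c).fun_mul ((hasDerivAt_id' t).const_mul α).exp).congr_deriv ?_
    ring
  refine antitoneOn_of_hasDerivWithinAt_nonpos (convex_Ici T)
    (fun t ht => (hderiv t ht).continuousAt.continuousWithinAt)
    (fun t ht => (hderiv t (interior_subset ht)).hasDerivWithinAt) fun t ht => ?_
  rw [interior_Ici] at ht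
  exact mul_nonpos_of_nonpos_of_nonneg (by linarith [hle t ht.le]) (exp_pos _).le

lemma le_max_of_hasDerivAt_le (hα : 0 ≤ α) (hu : ∀ t, T ≤ t → HasDerivAt u (u' t) t)
    (hle : ∀ t, T ≤ t → u' t ≤ α * (c - u t)) {t : ℝ} (ht : T ≤ t) : u t ≤ max (u T) c := by
  have hanti := antitoneOn_sub_mul_exp hu hle self_mem_Ici ht ht
  have hexp : exp (α * T) ≤ exp (α * t) := exp_le_exp.2 (mul_le_mul_of_nonneg_left ht hα)
  have hpos := exp_pos (α * T)
  simp only at hanti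
  rcases le_total (u T) c with hTc | hTc
  · nlinarith [le_max_right (u T) c]
  · nlinarith [le_max_left (u T) c]

lemma eventually_lt_of_hasDerivAt_le (hα : 0 < α)
    (h : ∀ᶠ t in atTop, HasDerivAt u (u' t) t ∧ u' t ≤ α * (c - u t)) {b : ℝ} (hb : c < b) :
    ∀ᶠ t in atTop, u t < b := by
  obtain ⟨T, hT⟩ := eventually_atTop.1 h
  have hanti := antitoneOn_sub_mul_exp (fun t ht => (hT t ht).1) fun t ht => (hT t ht).2
  have hdecay : Tendsto (fun t => (u T - c) * exp (α * T) * exp (-(α * t))) atTop (𝓝 0) := by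
    simpa using (tendsto_exp_neg_atTop_nhds_zero.comp
      (tendsto_id.const_mul_atTop hα)).const_mul ((u T - c) * exp (α * T))
  filter_upwards [eventually_ge_atTop T, hdecay.eventually_lt_const (sub_pos.2 hb)]
    with t ht hsmall
  have hle : u t - c ≤ (u T - c) * exp (α * T) * exp (-(α * t)) := by
    rw [exp_neg, ← div_eq_mul_inv, le_div_iff₀ (exp_pos _)]
    exact hanti self_mem_Ici ht ht
  linarith

lemma eventually_lt_of_hasDerivAt_eq_neg_mul_add {v : ℝ → ℝ} {L : ℝ} (hα : 0 < α)
    (hu : ∀ᶠ t in atTop, HasDerivAt u (-α * u t + v t) t) (hv : Tendsto v atTop (𝓝 L))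
    {b : ℝ} (hb : L / α < b) : ∀ᶠ t in atTop, u t < b := by
  obtain ⟨c, hc, hcb⟩ := exists_between hb
  have hvc : ∀ᶠ t in atTop, v t < α * c :=
    hv.eventually_lt_const (by rwa [div_lt_iff₀' hα] at hc)
  refine eventually_lt_of_hasDerivAt_le (u' := fun t => -α * u t + v t) hα ?_ hcb
  filter_upwards [hu, hvc] with t hut hvt
  exact ⟨hut, by linarith⟩

theorem tendsto_of_hasDerivAt_eq_neg_mul_add {v : ℝ → ℝ} {L : ℝ} (hα : 0 < α)
    (hu : ∀ᶠ t in atTop, HasDerivAt u (-α * u t + v t) t) (hv : Tendsto v atTop (𝓝 L)) :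
    Tendsto u atTop (𝓝 (L / α)) := by
  refine tendsto_order.2
    ⟨fun a ha => ?_, fun b hb => eventually_lt_of_hasDerivAt_eq_neg_mul_add hα hu hv hb⟩
  have hneg : ∀ᶠ t in atTop, HasDerivAt (fun t => -u t) (-α * -u t + -v t) t :=
    hu.mono fun t ht => ht.fun_neg.congr_deriv (by ring)
  filter_upwards [eventually_lt_of_hasDerivAt_eq_neg_mul_add hα hneg hv.neg
    (b := -a) (by rw [neg_div]; linarith)] with t ht
  linarith

end LinearComparison

lemma exists_hasDerivAt_of_continuousOn_Ici {g : ℝ → ℝ} {a : ℝ} (hg : ContinuousOn g (Ici a)) :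
    ∃ G : ℝ → ℝ, ∀ t, a ≤ t → HasDerivAt G (g t) t := by
  have hcont : Continuous fun s => g (max s a) :=
    hg.comp_continuous (continuous_id.max continuous_const) fun s => le_max_right s a
  refine ⟨fun t => ∫ s in a..t, g (max s a), fun t ht => ?_⟩
  simpa [max_eq_left ht] using (hcont.integral_hasStrictDerivAt a t).hasDerivAt

lemma eq_mul_exp_sub_of_hasDerivAt {f g G : ℝ → ℝ} {a t : ℝ}
    (hf : ∀ s, a ≤ s → HasDerivAt f (g s * f s) s) (hG : ∀ s, a ≤ s → HasDerivAt G (g s) s)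
    (ht : a ≤ t) : f t = f a * exp (G t - G a) := by
  have hderiv : ∀ s, a ≤ s → HasDerivAt (fun s => f s * exp (-G s)) 0 s := fun s hs => by
    refine ((hf s hs).fun_mul (hG s hs).fun_neg.exp).congr_deriv ?_
    ring
  have hconst := constant_of_has_deriv_right_zero (b := t)
    (fun s hs => (hderiv s hs.1).continuousAt.continuousWithinAt)
    (fun s hs => (hderiv s hs.1).hasDerivWithinAt) t ⟨ht, le_rfl⟩
  simp only [exp_neg] at hconst
  rw [exp_sub]
  field_simp at hconst ⊢
  linarith

structure IsEigenAntSolution {n : ℕ} (α β : ℝ) (d : Fin n → ℝ) (x : ℝ → Fin n → ℝ) : Prop where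
  sum_ne_zero : ∀ t, 0 ≤ t → ∑ j, x t j ≠ 0
  hasDerivAt : ∀ i t, 0 ≤ t →
    HasDerivAt (fun s => x s i) ((-α + β * d i / ∑ j, x t j) * x t i) t

namespace IsEigenAntSolution

variable {n : ℕ} {α β : ℝ} {d : Fin n → ℝ} {x : ℝ → Fin n → ℝ}

lemma hasDerivAt_sum (h : IsEigenAntSolution α β d x) {t : ℝ} (ht : 0 ≤ t) :
    HasDerivAt (fun s => ∑ j, x s j)
      (-α * ∑ j, x t j + β * ((∑ j, d j * x t j) / ∑ j, x t j)) t := by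
  refine (HasDerivAt.fun_sum fun i _ => h.hasDerivAt i t ht).congr_deriv ?_
  rw [Finset.mul_sum, Finset.sum_div, Finset.mul_sum, ← Finset.sum_add_distrib]
  exact Finset.sum_congr rfl fun i _ => by ring

lemma sum_pos (h : IsEigenAntSolution α β d x) (hx0 : ∀ i, 0 < x 0 i) {t : ℝ} (ht : 0 ≤ t) :
    0 < ∑ j, x t j :=
  isPreconnected_Ici.lt_of_ne (f := fun s => ∑ j, x s j)
    (fun _ hs => (h.hasDerivAt_sum hs).continuousAt.continuousWithinAt) h.sum_ne_zero
    ⟨0, self_mem_Ici, (Finset.sum_nonneg fun i _ => (hx0 i).le).lt_of_ne'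
      (h.sum_ne_zero 0 le_rfl)⟩ ht

lemma exists_eq_mul_exp (h : IsEigenAntSolution α β d x) :
    ∃ I : ℝ → ℝ, (∀ t, 0 ≤ t → HasDerivAt I (∑ j, x t j)⁻¹ t) ∧
      ∀ i t, 0 ≤ t → x t i = x 0 i * exp (-α * t + β * d i * (I t - I 0)) := by
  obtain ⟨I, hI⟩ := exists_hasDerivAt_of_continuousOn_Ici (a := 0)
    (g := fun t => (∑ j, x t j)⁻¹) (ContinuousOn.inv₀
      (fun s hs => (h.hasDerivAt_sum hs).continuousAt.continuousWithinAt)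
      fun s hs => h.sum_ne_zero s hs)
  refine ⟨I, hI, fun i t ht => ?_⟩
  have hG : ∀ s, 0 ≤ s → HasDerivAt (fun s => -α * s + β * d i * I s)
      (-α + β * d i / ∑ j, x s j) s := fun s hs =>
    (((hasDerivAt_id' s).const_mul (-α)).fun_add ((hI s hs).const_mul (β * d i))).congr_deriv
      (by ring)
  rw [eq_mul_exp_sub_of_hasDerivAt (h.hasDerivAt i) hG ht]
  ring_nf

lemma pos (h : IsEigenAntSolution α β d x) (hx0 : ∀ i, 0 < x 0 i) (i : Fin n) {t : ℝ}
    (ht : 0 ≤ t) : 0 < x t i := by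
  obtain ⟨I, -, hrep⟩ := h.exists_eq_mul_exp
  rw [hrep i t ht]
  exact mul_pos (hx0 i) (exp_pos _)

lemma sum_mul_div_sum_le (h : IsEigenAntSolution α β d x) (hx0 : ∀ i, 0 < x 0 i) {D : ℝ}
    (hD : ∀ i, d i ≤ D) {t : ℝ} (ht : 0 ≤ t) : (∑ j, d j * x t j) / ∑ j, x t j ≤ D := by
  rw [div_le_iff₀ (h.sum_pos hx0 ht), Finset.mul_sum]
  exact Finset.sum_le_sum fun j _ => mul_le_mul_of_nonneg_right (hD j) (h.pos hx0 j ht).le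

lemma sum_le_max (h : IsEigenAntSolution α β d x) (hx0 : ∀ i, 0 < x 0 i) (hα : 0 < α)
    (hβ : 0 ≤ β) {D : ℝ} (hD : ∀ i, d i ≤ D) {t : ℝ} (ht : 0 ≤ t) :
    ∑ j, x t j ≤ max (∑ j, x 0 j) (β * D / α) := by
  refine le_max_of_hasDerivAt_le hα.le (fun s hs => h.hasDerivAt_sum hs) (fun s hs => ?_) ht
  have := mul_le_mul_of_nonneg_left (h.sum_mul_div_sum_le hx0 hD hs) hβ
  rw [mul_sub, mul_div_cancel₀ _ hα.ne']
  linarith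

variable {i₀ : Fin n}

lemma tendsto_div_sum_of_lt (h : IsEigenAntSolution α β d x) (hx0 : ∀ i, 0 < x 0 i)
    (hα : 0 < α) (hβ : 0 < β) (hi₀ : ∀ i, d i ≤ d i₀) {i : Fin n} (hi : d i < d i₀) :
    Tendsto (fun t => x t i / ∑ j, x t j) atTop (𝓝 0) := by
  obtain ⟨I, hI, hrep⟩ := h.exists_eq_mul_exp
  set M := max (∑ j, x 0 j) (β * d i₀ / α)
  have hM : 0 < M := lt_max_of_lt_left (h.sum_pos hx0 le_rfl)
  have hgrowth : ∀ t, 0 ≤ t → M⁻¹ * (t - 0) ≤ I t - I 0 :=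
    fun t ht => (convex_Ici 0).mul_sub_le_image_sub_of_le_deriv
      (fun s hs => (hI s hs).continuousAt.continuousWithinAt)
      (fun s hs => (hI s (interior_subset hs)).differentiableAt.differentiableWithinAt)
      (fun s hs => by
        have hs : 0 ≤ s := interior_subset hs
        rw [(hI s hs).deriv]
        exact inv_anti₀ (h.sum_pos hx0 hs) (h.sum_le_max hx0 hα hβ.le hi₀ hs))
      0 self_mem_Ici t ht ht
  have hItop : Tendsto (fun t => I t - I 0) atTop atTop :=
    tendsto_atTop_mono' _ ((eventually_ge_atTop 0).mono hgrowth)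
      (by simpa using tendsto_id.const_mul_atTop (inv_pos.2 hM))
  have hdecay : Tendsto (fun t => x 0 i / x 0 i₀ * exp (β * (d i - d i₀) * (I t - I 0)))
      atTop (𝓝 0) := by
    simpa using (tendsto_exp_atBot.comp (hItop.const_mul_atTop_of_neg
      (mul_neg_of_pos_of_neg hβ (sub_neg.2 hi)))).const_mul (x 0 i / x 0 i₀)
  refine tendsto_of_tendsto_of_tendsto_of_le_of_le' tendsto_const_nhds hdecay ?_ ?_
  · filter_upwards [eventually_ge_atTop 0] with t ht
    exact div_nonneg (h.pos hx0 i ht).le (h.sum_pos hx0 ht).le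
  · filter_upwards [eventually_ge_atTop 0] with t ht
    calc x t i / ∑ j, x t j ≤ x t i / x t i₀ :=
          div_le_div_of_nonneg_left (h.pos hx0 i ht).le (h.pos hx0 i₀ ht)
            (Finset.single_le_sum (fun j _ => (h.pos hx0 j ht).le) (Finset.mem_univ i₀))
      _ = x 0 i / x 0 i₀ * exp (β * (d i - d i₀) * (I t - I 0)) := by
          rw [hrep i t ht, hrep i₀ t ht, mul_div_mul_comm, ← exp_sub]
          ring_nf

lemma tendsto_sum_mul_div_sum (h : IsEigenAntSolution α β d x) (hx0 : ∀ i, 0 < x 0 i)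
    (hα : 0 < α) (hβ : 0 < β) (hi₀ : ∀ i, d i ≤ d i₀) :
    Tendsto (fun t => (∑ j, d j * x t j) / ∑ j, x t j) atTop (𝓝 (d i₀)) := by
  have hterm : ∀ j, Tendsto (fun t => (d i₀ - d j) * (x t j / ∑ k, x t k)) atTop (𝓝 0) := by
    intro j
    rcases (hi₀ j).lt_or_eq with hj | hj
    · simpa using (h.tendsto_div_sum_of_lt hx0 hα hβ hi₀ hj).const_mul (d i₀ - d j)
    · simp [hj]
  have hsum := (tendsto_const_nhds (x := d i₀)).sub
    (tendsto_finsetSum Finset.univ fun j _ => hterm j)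
  rw [Finset.sum_const_zero, sub_zero] at hsum
  refine hsum.congr' ?_
  filter_upwards [eventually_ge_atTop 0] with t ht
  have := (h.sum_pos hx0 ht).ne'
  simp only [mul_div_assoc', ← Finset.sum_div, sub_mul, Finset.sum_sub_distrib, ← Finset.mul_sum]
  field_simp
  ring

theorem tendsto_sum (h : IsEigenAntSolution α β d x) (hx0 : ∀ i, 0 < x 0 i)
    (hα : 0 < α) (hβ : 0 < β) (hi₀ : ∀ i, d i ≤ d i₀) :
    Tendsto (fun t => ∑ j, x t j) atTop (𝓝 (β * d i₀ / α)) :=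
  tendsto_of_hasDerivAt_eq_neg_mul_add hα ((eventually_ge_atTop 0).mono fun _ ht =>
    h.hasDerivAt_sum ht) ((h.tendsto_sum_mul_div_sum hx0 hα hβ hi₀).const_mul β)

theorem tendsto_sum_filter_eq (h : IsEigenAntSolution α β d x) (hx0 : ∀ i, 0 < x 0 i)
    (hα : 0 < α) (hβ : 0 < β) (hi₀ : ∀ i, d i ≤ d i₀) :
    Tendsto (fun t => ∑ j ∈ Finset.univ.filter (fun j => d j = d i₀), x t j) atTop
      (𝓝 (β * d i₀ / α)) := by
  have hS := h.tendsto_sum hx0 hα hβ hi₀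
  have hrest : Tendsto (fun t => ∑ j ∈ Finset.univ.filter (fun j => ¬d j = d i₀), x t j) atTop
      (𝓝 0) := by
    have hzero : ∀ j ∈ Finset.univ.filter (fun j => ¬d j = d i₀),
        Tendsto (fun t => x t j) atTop (𝓝 0) := fun j hj => by
      have hj : d j < d i₀ := (hi₀ j).lt_of_ne (Finset.mem_filter.1 hj).2
      refine (zero_mul (β * d i₀ / α) ▸ (h.tendsto_div_sum_of_lt hx0 hα hβ hi₀ hj).mul hS).congr' ?_
      filter_upwards [eventually_ge_atTop 0] with t ht
      exact div_mul_cancel₀ _ (h.sum_pos hx0 ht).ne'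
    simpa using tendsto_finsetSum _ hzero
  refine (sub_zero (β * d i₀ / α) ▸ hS.sub hrest).congr fun t => ?_
  rw [sub_eq_iff_eq_add', Finset.sum_filter_not_add_sum_filter]

end IsEigenAntSolution

theorem stmt12_general
    (n : ℕ) (hn : 0 < n) (α β : ℝ) (hα : 0 < α) (hβ : 0 < β)
    (d : Fin n → ℝ) (hd : ∀ i j : Fin n, i ≤ j → d j ≤ d i)
    (x : ℝ → Fin n → ℝ)
    (hS : ∀ t : ℝ, 0 ≤ t → (∑ j, x t j) ≠ 0)
    (hode : ∀ (i : Fin n) (t : ℝ), 0 ≤ t →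
      HasDerivAt (fun s => x s i) ((-α + β * d i / (∑ j, x t j)) * x t i) t)
    (hx0 : ∀ i, 0 < x 0 i)
    :
    Tendsto (fun t => ∑ j, x t j) atTop (nhds (β * d ⟨0, hn⟩ / α)) ∧
    Tendsto (fun t => ∑ j ∈ Finset.univ.filter (fun j => d j = d ⟨0, hn⟩), x t j)
      atTop (nhds (β * d ⟨0, hn⟩ / α)) := by
  have h : IsEigenAntSolution α β d x := ⟨hS, hode⟩
  have hmax : ∀ i, d i ≤ d ⟨0, hn⟩ := fun i => hd _ i (Nat.zero_le _)
  exact ⟨h.tendsto_sum hx0 hα hβ hmax, h.tendsto_sum_filter_eq hx0 hα hβ hmax⟩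

theorem stmt12
    (n : ℕ) (hn : 0 < n) (α β : ℝ) (hα : 0 < α) (hβ : 0 < β)
    (d : Fin n → ℝ) (hd : ∀ i j : Fin n, i ≤ j → d j ≤ d i) (hdpos : ∀ i, 0 < d i)
    (x : ℝ → Fin n → ℝ)
    (hS : ∀ t : ℝ, 0 ≤ t → (∑ j, x t j) ≠ 0)
    (hode : ∀ (i : Fin n) (t : ℝ), 0 ≤ t →
      HasDerivAt (fun s => x s i) ((-α + β * d i / (∑ j, x t j)) * x t i) t)
    (hx0 : ∀ i, 0 < x 0 i)
    :
    Tendsto (fun t => ∑ j, x t j) atTop (nhds (β * d ⟨0, hn⟩ / α)) ∧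
    Tendsto (fun t => ∑ j ∈ Finset.univ.filter (fun j => d j = d ⟨0, hn⟩), x t j)
      atTop (nhds (β * d ⟨0, hn⟩ / α)) :=
  stmt12_general n hn α β hα hβ d hd x hS hode hx0
end

section
/- Let x be a solution of the EigenAnt dynamics with positive initial conditions, and assume at least one index i has d_i < d_1. Define σ_1 := (1/(β d_1)) Σ_{j : d_j = d_1} x_j(0), d′_2 := max{ d_j : d_j < d_1 }, σ_2 := (1/(β d′_2)) Σ_{j : d_j = d′_2} x_j(0), and F(u) := Σ_{i=1}^n (x_i(0)/(β d_i)) e^{β d_i u}. Then the quantity I(t) := ∫₀^t ds/S(s) = F^{−1}(F(0) + (e^{αt}−1)/α) satisfies ( F(0) + (e^{αt}−1)/α − σ_1 e^{β d_1 I(t)} ) / ( σ_2 ( e^{αt}/(α σ_1) )^{d′_2/d_1} ) → 1 as t → +∞. -/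
open Filter MeasureTheory Set Real
open Asymptotics Finset Topology

/-!
Along the time change `J(t) = ∫₀ᵗ ds / S(s)` each coordinate is explicit,
`x_i(t) = x_i(0) e^{β d_i J(t) - α t}`, and summing the coordinates gives `(F ∘ J)' = e^{α t}`,
i.e. `F(J(t)) = F(0) + (e^{α t} - 1) / α`; in particular `J(t) → ∞`. What remains is an asymptotic
statement about the exponential sum `F(u)` as `u → ∞`: removing the leading level leaves
`F(u) - σ₁ e^{β d₁ u} ~ σ₂ e^{β d₂' u}`, while `e^{α t} / (α σ₁) = (F(u) + 1/α - F(0)) / σ₁ ~ e^{β d₁ u}`,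
whose `d₂'/d₁`-th power is `~ e^{β d₂' u}`.
-/

theorem ContinuousOn.exists_hasDerivAt_eq_integral {f : ℝ → ℝ} {a : ℝ}
    (hf : ContinuousOn f (Ici a)) :
    ∃ J : ℝ → ℝ, ∀ t, a ≤ t → J t = ∫ s in a..t, f s ∧ HasDerivAt J (f t) t := by
  have hg : Continuous fun s => f (max s a) :=
    hf.comp_continuous (continuous_id.max continuous_const) fun s => le_max_right s a
  refine ⟨fun t => ∫ s in a..t, f (max s a), fun t ht => ⟨?_, ?_⟩⟩
  · refine intervalIntegral.integral_congr fun s hs => ?_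
    rw [uIcc_of_le ht] at hs
    simp [max_eq_left hs.1]
  · simpa [max_eq_left ht] using (hg.integral_hasStrictDerivAt a t).hasDerivAt

theorem eq_of_hasDerivAt_eq_of_le {f g f' : ℝ → ℝ} {a t : ℝ}
    (hf : ∀ s, a ≤ s → HasDerivAt f (f' s) s) (hg : ∀ s, a ≤ s → HasDerivAt g (f' s) s)
    (ha : f a = g a) (ht : a ≤ t) : f t = g t :=
  eq_of_has_deriv_right_eq (fun s hs => (hf s hs.1).hasDerivWithinAt)
    (fun s hs => (hg s hs.1).hasDerivWithinAt)
    (fun s hs => (hf s hs.1).continuousAt.continuousWithinAt)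
    (fun s hs => (hg s hs.1).continuousAt.continuousWithinAt) ha t ⟨ht, le_rfl⟩

theorem Monotone.tendsto_atTop_of_comp {ι α β : Type*} [LinearOrder α] [Preorder β]
    [NoMaxOrder β] {l : Filter ι} {F : α → β} {J : ι → α} (hF : Monotone F)
    (h : Tendsto (F ∘ J) l atTop) : Tendsto J l atTop :=
  tendsto_atTop.2 fun M => (h.eventually_gt_atTop (F M)).mono fun _ ht => (hF.reflect_lt ht).le

section ExpSum

variable {ι : Type*} {c e : ι → ℝ}

theorem monotone_sum_mul_exp [Fintype ι] (hc : ∀ i, 0 ≤ c i) (he : ∀ i, 0 ≤ e i) :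
    Monotone fun u => ∑ i, c i * exp (e i * u) := fun _ _ huv =>
  sum_le_sum fun i _ =>
    mul_le_mul_of_nonneg_left (exp_le_exp.2 (mul_le_mul_of_nonneg_left huv (he i))) (hc i)

theorem sum_mul_exp_sub_eq (s : Finset ι) (m u : ℝ) :
    ∑ i ∈ s, c i * exp (e i * u) - (∑ i ∈ s with e i = m, c i) * exp (m * u) =
      ∑ i ∈ s with e i ≠ m, c i * exp (e i * u) := by
  rw [sub_eq_iff_eq_add', ← sum_filter_add_sum_filter_not s (e · = m), sum_mul]
  congr 1
  exact sum_congr rfl fun i hi => by rw [(mem_filter.1 hi).2]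

theorem isEquivalent_sum_mul_exp (s : Finset ι) {m : ℝ} (hle : ∀ i ∈ s, e i ≤ m)
    (hσ : ∑ i ∈ s with e i = m, c i ≠ 0) :
    (fun u => ∑ i ∈ s, c i * exp (e i * u)) ~[atTop]
      fun u => (∑ i ∈ s with e i = m, c i) * exp (m * u) := by
  refine IsLittleO.isEquivalent ?_
  simp only [Pi.sub_def, sum_mul_exp_sub_eq]
  refine IsLittleO.fun_sum fun i hi => ?_
  obtain ⟨his, hne⟩ := mem_filter.1 hi
  have hlt : 0 < m - e i := sub_pos.2 ((hle i his).lt_of_ne hne)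
  refine ((isLittleO_exp_comp_exp_comp.2 ?_).const_mul_left (c i)).const_mul_right hσ
  simpa only [← sub_mul] using tendsto_id.const_mul_atTop (f := fun u : ℝ => u) hlt

theorem isEquivalent_sum_mul_exp_sub_leading [Fintype ι] {m₁ m₂ : ℝ} (hle₁ : ∀ i, e i ≤ m₁)
    (hm : m₂ < m₁) (hle₂ : ∀ i, e i < m₁ → e i ≤ m₂) (hσ : ∑ i with e i = m₂, c i ≠ 0) :
    (fun u => ∑ i, c i * exp (e i * u) - (∑ i with e i = m₁, c i) * exp (m₁ * u)) ~[atTop]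
      fun u => (∑ i with e i = m₂, c i) * exp (m₂ * u) := by
  have hlevel : (univ.filter (e · ≠ m₁)).filter (e · = m₂) = univ.filter (e · = m₂) := by
    rw [filter_filter]
    exact filter_congr fun i _ => and_iff_right_of_imp fun h : e i = m₂ => h ▸ hm.ne
  simp only [sum_mul_exp_sub_eq]
  rw [← hlevel] at hσ ⊢
  exact isEquivalent_sum_mul_exp _ (fun i hi => hle₂ i ((hle₁ i).lt_of_ne (mem_filter.1 hi).2)) hσ

theorem isEquivalent_sum_mul_exp_add_const_div [Fintype ι] {m σ : ℝ} (K : ℝ) (hm : 0 < m)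
    (hle : ∀ i, e i ≤ m) (hσ : ∑ i with e i = m, c i = σ) (hσ0 : σ ≠ 0) :
    (fun u => (∑ i, c i * exp (e i * u) + K) / σ) ~[atTop] fun u => exp (m * u) := by
  have hsum := isEquivalent_sum_mul_exp (c := c) univ (fun i _ => hle i) (hσ ▸ hσ0)
  rw [hσ] at hsum
  have hnorm : Tendsto (norm ∘ fun u => σ * exp (m * u)) atTop atTop := by
    simpa [Function.comp_def, norm_mul] using
      (tendsto_exp_atTop.comp (tendsto_id.const_mul_atTop hm)).const_mul_atTop (norm_pos_iff.2 hσ0)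
  refine ((hsum.add_const_of_norm_tendsto_atTop (c := K) hnorm).div
    (IsEquivalent.refl (u := fun _ => σ))).congr_right (Eventually.of_forall fun u => ?_)
  simp [hσ0]

theorem tendsto_sum_mul_exp_sub_div_rpow [Fintype ι] {m₁ m₂ σ₁ σ₂ p : ℝ} (K : ℝ)
    (hc : ∀ i, 0 < c i) (h₁ : ∃ i, e i = m₁) (hle₁ : ∀ i, e i ≤ m₁) (hm₁ : 0 < m₁)
    (h₂ : ∃ i, e i = m₂) (hm₂ : m₂ < m₁) (hle₂ : ∀ i, e i < m₁ → e i ≤ m₂)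
    (hσ₁ : ∑ i with e i = m₁, c i = σ₁) (hσ₂ : ∑ i with e i = m₂, c i = σ₂)
    (hp : m₁ * p = m₂) :
    Tendsto (fun u => (∑ i, c i * exp (e i * u) - σ₁ * exp (m₁ * u)) /
      (σ₂ * ((∑ i, c i * exp (e i * u) + K) / σ₁) ^ p)) atTop (𝓝 1) := by
  have level_ne_zero : ∀ {m : ℝ}, (∃ i, e i = m) → ∑ i with e i = m, c i ≠ 0 := fun ⟨i, hi⟩ =>
    (sum_pos (fun i _ => hc i) ⟨i, mem_filter.2 ⟨mem_univ i, hi⟩⟩).ne'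
  set V := fun u => σ₂ * exp (m₂ * u)
  have hV : ∀ u, V u ≠ 0 := fun u => mul_ne_zero (hσ₂ ▸ level_ne_zero h₂) (exp_pos _).ne'
  have hnum : (fun u => ∑ i, c i * exp (e i * u) - σ₁ * exp (m₁ * u)) ~[atTop] V := by
    subst hσ₁ hσ₂
    exact isEquivalent_sum_mul_exp_sub_leading hle₁ hm₂ hle₂ (level_ne_zero h₂)
  have hden : (fun u => σ₂ * ((∑ i, c i * exp (e i * u) + K) / σ₁) ^ p) ~[atTop] V := by
    refine (IsEquivalent.refl.mul ((isEquivalent_sum_mul_exp_add_const_div K hm₁ hle₁ hσ₁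
      (hσ₁ ▸ level_ne_zero h₁)).rpow (fun u => (exp_pos _).le) (r := p))).congr_right
      (Eventually.of_forall fun u => ?_)
    simp only [V, Pi.mul_apply, Pi.pow_apply, ← exp_mul, ← hp]
    ring_nf
  have hz : ∀ᶠ u in atTop, V u ≠ 0 := Eventually.of_forall hV
  have := ((isEquivalent_iff_tendsto_one hz).1 hnum).div
    ((isEquivalent_iff_tendsto_one hz).1 hden) one_ne_zero
  rw [div_one] at this
  exact this.congr fun u => div_div_div_cancel_right₀ (hV u) _ _

end ExpSum

namespace EigenAnt

variable {ι : Type*} [Fintype ι] {α β : ℝ} {d : ι → ℝ} {x : ℝ → ι → ℝ} {J : ℝ → ℝ}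

def IsSolution (α β : ℝ) (d : ι → ℝ) (x : ℝ → ι → ℝ) : Prop :=
  ∀ i t, 0 ≤ t → HasDerivAt (fun s => x s i) ((-α + β * d i / ∑ j, x t j) * x t i) t

theorem continuousOn_sum (hx : IsSolution α β d x) :
    ContinuousOn (fun t => ∑ j, x t j) (Ici 0) := fun t ht =>
  (HasDerivAt.fun_sum fun i _ => hx i t ht).continuousAt.continuousWithinAt

theorem continuousOn_inv_sum (hS : ∀ t, 0 ≤ t → ∑ j, x t j ≠ 0) (hx : IsSolution α β d x) :
    ContinuousOn (fun t => (∑ j, x t j)⁻¹) (Ici 0) :=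
  (continuousOn_sum hx).inv₀ hS

theorem eq_mul_exp (hx : IsSolution α β d x)
    (hJ : ∀ t, 0 ≤ t → HasDerivAt J (∑ j, x t j)⁻¹ t) (hJ0 : J 0 = 0) (i : ι) {t : ℝ}
    (ht : 0 ≤ t) : x t i = x 0 i * exp (β * d i * J t - α * t) := by
  have hconst : x t i * exp (α * t - β * d i * J t) = x 0 i := by
    refine eq_of_hasDerivAt_eq_of_le (f := fun t => x t i * exp (α * t - β * d i * J t))
      (f' := fun _ => 0) (fun s hs => ?_) (fun s _ => hasDerivAt_const s _) (by simp [hJ0]) ht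
    refine ((hx i s hs).mul
      (((hasDerivAt_id' s).const_mul α).sub ((hJ s hs).const_mul (β * d i))).exp).congr_deriv ?_
    ring
  rw [← hconst, mul_assoc, ← exp_add, sub_add_sub_cancel', sub_self, exp_zero, mul_one]

theorem apply_eq_add_exp (hS : ∀ t, 0 ≤ t → ∑ j, x t j ≠ 0) (hx : IsSolution α β d x)
    (hJ : ∀ t, 0 ≤ t → HasDerivAt J (∑ j, x t j)⁻¹ t) (hJ0 : J 0 = 0) (hα : α ≠ 0)
    (hβd : ∀ i, β * d i ≠ 0) {F : ℝ → ℝ}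
    (hF : ∀ u, F u = ∑ i, x 0 i / (β * d i) * exp (β * d i * u)) {t : ℝ} (ht : 0 ≤ t) :
    F (J t) = F 0 + (exp (α * t) - 1) / α := by
  refine eq_of_hasDerivAt_eq_of_le (f := fun t => F (J t))
    (g := fun t => F 0 + (exp (α * t) - 1) / α) (f' := fun t => exp (α * t))
    (fun s hs => ?_) (fun s _ => ?_) (by simp [hJ0]) ht
  · simp only [hF]
    refine (HasDerivAt.fun_sum fun i _ =>
      (((hJ s hs).const_mul (β * d i)).exp).const_mul (x 0 i / (β * d i))).congr_deriv ?_
    -- by the solution formula, `x_i(0) e^{β d_i J(s)} = e^{α s} x_i(s)`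
    have hterm : ∀ i, x 0 i / (β * d i) * (exp (β * d i * J s) * (β * d i * (∑ j, x s j)⁻¹)) =
        x s i * (exp (α * s) * (∑ j, x s j)⁻¹) := fun i => by
      rw [eq_mul_exp hx hJ hJ0 i hs, exp_sub]
      field_simp [left_ne_zero_of_mul (hβd i), right_ne_zero_of_mul (hβd i), hS s hs]
    rw [sum_congr rfl fun i _ => hterm i, ← sum_mul, mul_left_comm, mul_inv_cancel₀ (hS s hs),
      mul_one]
  · refine ((((hasDerivAt_id' s).const_mul α).exp.sub_const 1).div_const α).const_add (F 0)
      |>.congr_deriv ?_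
    field_simp

theorem tendsto_atTop (hS : ∀ t, 0 ≤ t → ∑ j, x t j ≠ 0) (hx : IsSolution α β d x)
    (hx0 : ∀ i, 0 ≤ x 0 i) (hJ : ∀ t, 0 ≤ t → HasDerivAt J (∑ j, x t j)⁻¹ t) (hJ0 : J 0 = 0)
    (hα : 0 < α) (hβ : 0 < β) (hd : ∀ i, 0 < d i) : Tendsto J atTop atTop := by
  set F := fun u => ∑ i, x 0 i / (β * d i) * exp (β * d i * u)
  have hF : Monotone F :=
    monotone_sum_mul_exp (fun i => div_nonneg (hx0 i) (mul_pos hβ (hd i)).le)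
      fun i => (mul_pos hβ (hd i)).le
  refine hF.tendsto_atTop_of_comp
    ((tendsto_congr' (f₂ := fun t => F 0 + (exp (α * t) - 1) / α) ?_).2 ?_)
  · filter_upwards [eventually_ge_atTop 0] with t ht
    exact apply_eq_add_exp hS hx hJ hJ0 hα.ne' (fun i => (mul_pos hβ (hd i)).ne') (fun _ => rfl) ht
  · refine tendsto_atTop_add_const_left _ _ (Tendsto.atTop_div_const hα ?_)
    exact tendsto_atTop_add_const_right _ _ (tendsto_exp_atTop.comp (tendsto_id.const_mul_atTop hα))

theorem sum_filter_div_mul_eq (hβ : β ≠ 0) (a : ι → ℝ) (m : ℝ) :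
    ∑ i with β * d i = β * m, a i / (β * d i) = 1 / (β * m) * ∑ i with d i = m, a i := by
  simp only [mul_right_inj' hβ, mul_sum]
  exact sum_congr rfl fun i hi => by rw [(mem_filter.1 hi).2]; ring

end EigenAnt

theorem stmt15_general
    (n : ℕ) (hn : 0 < n) (α β : ℝ) (hα : 0 < α) (hβ : 0 < β)
    (d : Fin n → ℝ) (hd : ∀ i j : Fin n, i ≤ j → d j ≤ d i) (hdpos : ∀ i, 0 < d i)
    (x : ℝ → Fin n → ℝ)
    (hS : ∀ t : ℝ, 0 ≤ t → (∑ j, x t j) ≠ 0)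
    (hode : ∀ (i : Fin n) (t : ℝ), 0 ≤ t →
      HasDerivAt (fun s => x s i) ((-α + β * d i / (∑ j, x t j)) * x t i) t)
    (hx0 : ∀ i, 0 < x 0 i)
    (F : ℝ → ℝ)
    (hF : ∀ u, F u = ∑ i, x 0 i / (β * d i) * Real.exp (β * d i * u))
    (σ1 σ2 d2 : ℝ)
    (hσ1 : σ1 = (1 / (β * d ⟨0, hn⟩)) * ∑ j ∈ Finset.univ.filter (fun j => d j = d ⟨0, hn⟩), x 0 j)
    (hd2mem : ∃ j, d j = d2) (hd2lt : d2 < d ⟨0, hn⟩)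
    (hd2max : ∀ j, d j < d ⟨0, hn⟩ → d j ≤ d2)
    (hσ2 : σ2 = (1 / (β * d2)) * ∑ j ∈ Finset.univ.filter (fun j => d j = d2), x 0 j) :
    Tendsto (fun t =>
        (F 0 + (Real.exp (α * t) - 1) / α -
          σ1 * Real.exp (β * d ⟨0, hn⟩ * (∫ s in (0:ℝ)..t, (∑ j, x s j)⁻¹))) /
        (σ2 * (Real.exp (α * t) / (α * σ1)) ^ (d2 / d ⟨0, hn⟩))) atTop (nhds 1) := by
  have hβd : ∀ i, β * d i ≠ 0 := fun i => (mul_pos hβ (hdpos i)).ne'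
  obtain ⟨J, hJ⟩ := (EigenAnt.continuousOn_inv_sum hS hode).exists_hasDerivAt_eq_integral
  have hJ0 : J 0 = 0 := by simpa using (hJ 0 le_rfl).1
  have hJd := fun t ht => (hJ t ht).2
  have hR := tendsto_sum_mul_exp_sub_div_rpow (c := fun i => x 0 i / (β * d i))
    (e := fun i => β * d i) (1 / α - F 0) (fun i => div_pos (hx0 i) (mul_pos hβ (hdpos i)))
    ⟨⟨0, hn⟩, rfl⟩ (fun i => mul_le_mul_of_nonneg_left (hd _ i (Nat.zero_le _)) hβ.le)
    (mul_pos hβ (hdpos _)) (hd2mem.imp fun j hj => by rw [hj]) (mul_lt_mul_of_pos_left hd2lt hβ)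
    (fun i hi => mul_le_mul_of_nonneg_left (hd2max i (lt_of_mul_lt_mul_left hi hβ.le)) hβ.le)
    ((EigenAnt.sum_filter_div_mul_eq hβ.ne' _ _).trans hσ1.symm)
    ((EigenAnt.sum_filter_div_mul_eq hβ.ne' _ _).trans hσ2.symm)
    (p := d2 / d ⟨0, hn⟩) (by field_simp [(hdpos _).ne'])
  simp only [← hF] at hR
  refine (hR.comp (EigenAnt.tendsto_atTop hS hode (fun i => (hx0 i).le) hJd hJ0 hα hβ hdpos)).congr' ?_
  filter_upwards [eventually_ge_atTop 0] with t ht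
  have hFJ := EigenAnt.apply_eq_add_exp hS hode hJd hJ0 hα.ne' hβd hF ht
  have hbase : (F 0 + (exp (α * t) - 1) / α + (1 / α - F 0)) / σ1 = exp (α * t) / (α * σ1) := by
    rw [← div_div]
    congr 1
    ring
  simp only [Function.comp, ← (hJ t ht).1, hFJ, hbase]

theorem stmt15
    (n : ℕ) (hn : 0 < n) (α β : ℝ) (hα : 0 < α) (hβ : 0 < β)
    (d : Fin n → ℝ) (hd : ∀ i j : Fin n, i ≤ j → d j ≤ d i) (hdpos : ∀ i, 0 < d i)
    (x : ℝ → Fin n → ℝ)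
    (hS : ∀ t : ℝ, 0 ≤ t → (∑ j, x t j) ≠ 0)
    (hode : ∀ (i : Fin n) (t : ℝ), 0 ≤ t →
      HasDerivAt (fun s => x s i) ((-α + β * d i / (∑ j, x t j)) * x t i) t)
    (hx0 : ∀ i, 0 < x 0 i)
    (hsub : ∃ i, d i < d ⟨0, hn⟩)
    (F : ℝ → ℝ)
    (hF : ∀ u, F u = ∑ i, x 0 i / (β * d i) * Real.exp (β * d i * u))
    (σ1 σ2 d2 : ℝ)
    (hσ1 : σ1 = (1 / (β * d ⟨0, hn⟩)) * ∑ j ∈ Finset.univ.filter (fun j => d j = d ⟨0, hn⟩), x 0 j)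
    (hd2mem : ∃ j, d j = d2) (hd2lt : d2 < d ⟨0, hn⟩)
    (hd2max : ∀ j, d j < d ⟨0, hn⟩ → d j ≤ d2)
    (hσ2 : σ2 = (1 / (β * d2)) * ∑ j ∈ Finset.univ.filter (fun j => d j = d2), x 0 j) :
    Tendsto (fun t =>
        (F 0 + (Real.exp (α * t) - 1) / α -
          σ1 * Real.exp (β * d ⟨0, hn⟩ * (∫ s in (0:ℝ)..t, (∑ j, x s j)⁻¹))) /
        (σ2 * (Real.exp (α * t) / (α * σ1)) ^ (d2 / d ⟨0, hn⟩))) atTop (nhds 1) :=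
  stmt15_general n hn α β hα hβ d hd hdpos x hS hode hx0 F hF σ1 σ2 d2 hσ1 hd2mem hd2lt hd2max hσ2
end
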